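/- Let d ≥ 2 and let β_d > 1 be the largest real root of x^d - x^{d-1} - 1. For each k ≥ d-1, assign to tower i ∈ {1,…,d} at level k the height h_{i,k}, where h_{1,k} = S_d(max{0, k+1-d}) and h_{i,k} = S_d(max{0, k+i-2d}) for 2 ≤ i ≤ d, and the floor weight w_{i,k} = β_d^{-k} if i = 1 and β_d^{-(k+i-1)} otherwise. Then the total weight ∑_{i=1}^{d} h_{i,k} · w_{i,k} = 1 for every k ≥ 2d-1. -/
import Mathlib

def cutS (d : ℕ) : ℕ → ℕ
  | k => if _h : k ≤ d ∨ d < 2 then k + 1 else cutS d (k - 1) + cutS d (k - d)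
decreasing_by all_goals omega

lemma cutS_of_le (d n : ℕ) (h : n ≤ d) : cutS d n = n + 1 := by
  rw [cutS]; simp [h]

lemma cutS_rec (d n : ℕ) (h : d < n) (hd : 2 ≤ d) :
    cutS d n = cutS d (n - 1) + cutS d (n - d) := by
  rw [cutS]; rw [dif_neg (by omega)]

theorem tower_measures_sum_to_one (d : ℕ) (hd : 2 ≤ d) (β : ℝ) (hβ1 : 1 < β)
    (hroot : β ^ d - β ^ (d - 1) - 1 = 0) (k : ℕ) (hk : 2 * d - 1 ≤ k) :
    (∑ i ∈ Finset.Icc 1 d,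
        (if i = 1 then (cutS d (k + 1 - d) : ℝ) * (β⁻¹) ^ k
         else (cutS d (k + i - 2 * d) : ℝ) * (β⁻¹) ^ (k + i - 1))) = 1 := by
  set x : ℝ := β⁻¹ with hxdef
  have hβ0 : (0:ℝ) < β := lt_trans one_pos hβ1
  have hβd : β ^ (d-1) * β = β ^ d := by rw [← pow_succ]; congr 1; omega
  have hx : x + x ^ d = 1 := by
    rw [hxdef, inv_pow]
    field_simp
    nlinarith [pow_pos hβ0 d, pow_pos hβ0 (d-1)]
  have hxd : x ^ d = 1 - x := by linarith
  -- the key lemma in range form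
  have key : ∀ k, 2*d-1 ≤ k →
      (cutS d (k+1-d) : ℝ) * x ^ k
        + ∑ j ∈ Finset.range (d-1), (cutS d (k+j+2-2*d) : ℝ) * x ^ (k+j+1) = 1 := by
    intro k hk
    induction k, hk using Nat.le_induction with
    | base =>
      have e1 : 2*d-1+1-d = d := by omega
      rw [e1, cutS_of_le d d le_rfl]
      set f : ℕ → ℝ := fun j => ((j:ℝ)+2) * x^(d+j) with hf
      have hterm : ∀ j ∈ Finset.range (d-1),
          (cutS d (2*d-1+j+2-2*d) : ℝ) * x ^ (2*d-1+j+1)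
            = ((f j - f (j+1)) + x^(d+j+1)) := by
        intro j hj
        simp only [Finset.mem_range] at hj
        have e2 : 2*d-1+j+2-2*d = j+1 := by omega
        have e3 : 2*d-1+j+1 = (d+j) + d := by omega
        rw [e2, cutS_of_le d (j+1) (by omega), e3, pow_add, hxd]
        simp only [hf]
        push_cast
        ring
      rw [Finset.sum_congr rfl hterm, Finset.sum_add_distrib,
        Finset.sum_range_sub' f]
      simp only [hf]
      have e4 : d + (d-1) = 2*d-1 := by omega
      have e5 : ((d-1:ℕ):ℝ) = (d:ℝ) - 1 := by
        rw [Nat.cast_sub (by omega)]; norm_num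
      -- remaining: geometric telescope
      have geo : ∑ j ∈ Finset.range d, x ^ (d+j) = 1 - x ^ d := by
        have : ∀ j ∈ Finset.range d, x ^ (d+j) = x ^ j - x ^ (j+1) := by
          intro j _
          rw [add_comm, pow_add, hxd]; ring
        rw [Finset.sum_congr rfl this, Finset.sum_range_sub' (fun j => x ^ j), pow_zero]
      have peel : ∑ j ∈ Finset.range d, x ^ (d+j)
          = x ^ d + ∑ j ∈ Finset.range (d-1), x ^ (d+j+1) := by
        rw [show d = (d-1)+1 by omega]
        rw [Finset.sum_range_succ' (fun j => x ^ ((d-1)+1+j))]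
        simp [add_comm, add_assoc, add_left_comm]
      rw [e4, e5]
      push_cast
      simp only [Nat.cast_zero, zero_add, add_zero]
      linarith [geo, peel]
    | succ k hk ih =>
      have e1 : k+1+1-d = k+2-d := by omega
      rw [e1, cutS_rec d (k+2-d) (by omega) hd]
      have e2 : k+2-d-1 = k+1-d := by omega
      have e3 : k+2-d-d = k+2-2*d := by omega
      rw [e2, e3]
      set g : ℕ → ℝ := fun j => (cutS d (k+j+2-2*d) : ℝ) * x ^ (k+j+1) with hg
      have hsummand : ∀ j ∈ Finset.range (d-1),
          (cutS d (k+1+j+2-2*d) : ℝ) * x ^ (k+1+j+1) = g (j+1) := by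
        intro j _
        simp only [hg]
        have a1 : k+1+j+2-2*d = k+(j+1)+2-2*d := by omega
        have a2 : k+1+j+1 = k+(j+1)+1 := by omega
        rw [a1, a2]
      rw [Finset.sum_congr rfl hsummand]
      have shift : ∑ j ∈ Finset.range (d-1), g (j+1)
          = (∑ j ∈ Finset.range (d-1), g j) + g (d-1) - g 0 := by
        have h1 := Finset.sum_range_succ' g (d-1)
        have h2 := Finset.sum_range_succ g (d-1)
        rw [h2] at h1
        linarith
      rw [shift]
      have hgd : g (d-1) = (cutS d (k+1-d) : ℝ) * x ^ (k+d) := by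
        simp only [hg]
        have a1 : k+(d-1)+2-2*d = k+1-d := by omega
        have a2 : k+(d-1)+1 = k+d := by omega
        rw [a1, a2]
      have hg0 : g 0 = (cutS d (k+2-2*d) : ℝ) * x ^ (k+1) := by
        simp only [hg]
      have hpow : x ^ (k+1) + x ^ (k+d) = x ^ k := by
        rw [pow_add, pow_add, pow_one, hxd]; ring
      rw [hgd, hg0]
      push_cast
      nlinarith [ih, hpow]
  -- now convert the Icc sum to the range form
  have hIcc : Finset.Icc 1 d = Finset.Ico 1 (d+1) := by rw [Finset.Ico_add_one_right_eq_Icc]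
  rw [hIcc, Finset.sum_Ico_eq_sum_range]
  have e0 : d + 1 - 1 = d := by omega
  rw [e0, show Finset.range d = Finset.range ((d-1)+1) by congr 1; omega,
    Finset.sum_range_succ']
  have h2 : ∀ i ∈ Finset.range (d-1),
      (if 1+(i+1) = 1 then (cutS d (k + 1 - d) : ℝ) * x ^ k
       else (cutS d (k + (1+(i+1)) - 2 * d) : ℝ) * x ^ (k + (1+(i+1)) - 1))
      = (cutS d (k+i+2-2*d) : ℝ) * x ^ (k+i+1) := by
    intro i _
    rw [if_neg (by omega)]
    have a1 : k + (1+(i+1)) - 2*d = k+i+2-2*d := by omega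
    have a2 : k + (1+(i+1)) - 1 = k+i+1 := by omega
    rw [a1, a2]
  rw [Finset.sum_congr rfl h2]
  norm_num
  linarith [key k hk]
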